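/- arXiv:2502.18908 — 2 statements merged into one kernel-verified Lean document; each statement's English description precedes it below -/
import Mathlib

section
/- Let H be a real Hilbert space and Q a measure on H such that every finite-dimensional affine subspace of H is Q-null. Then for every k ≥ 1, every finite-dimensional affine subspace A of H^k satisfies Q^{⊗k}(A) = 0. -/
open MeasureTheory

/-- A finite-dimensional affine subspace of a product lies in the cylinder over its image in a
single factor, and that cylinder is null because `0 * ∞ = 0`. -/
theorem MeasureTheory.Measure.pi_affineSubspace_eq_zero {𝕜 ι : Type*} [DivisionRing 𝕜]
    [Fintype ι] {E : ι → Type*} [∀ i, AddCommGroup (E i)] [∀ i, Module 𝕜 (E i)]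
    [∀ i, MeasurableSpace (E i)] (μ : ∀ i, Measure (E i)) [∀ i, SigmaFinite (μ i)] (i : ι)
    (hμ : ∀ B : AffineSubspace 𝕜 (E i), FiniteDimensional 𝕜 B.direction → μ i B = 0)
    (A : AffineSubspace 𝕜 (∀ i, E i)) [FiniteDimensional 𝕜 A.direction] :
    Measure.pi μ A = 0 := by
  let B := A.map (AffineMap.proj i : (∀ i, E i) →ᵃ[𝕜] E i)
  have hB : μ i B = 0 := hμ B inferInstance
  refine measure_mono_null (fun x hx => ?_) (Measure.pi_eval_preimage_null μ hB)
  exact ⟨x, hx, rfl⟩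

theorem fd_affine_subspace_null_in_power_general
    {H : Type*} [NormedAddCommGroup H] [InnerProductSpace ℝ H]
    [MeasurableSpace H]
    (Q : Measure H) [SigmaFinite Q]
    (hQ : ∀ A : AffineSubspace ℝ H, FiniteDimensional ℝ A.direction → Q (A : Set H) = 0)
    (k : ℕ) (hk : 1 ≤ k)
    (A : AffineSubspace ℝ (Fin k → H)) (hA : FiniteDimensional ℝ A.direction) :
    (Measure.pi fun _ : Fin k => Q) (A : Set (Fin k → H)) = 0 :=
  Measure.pi_affineSubspace_eq_zero _ ⟨0, hk⟩ hQ A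

theorem fd_affine_subspace_null_in_power
    {H : Type*} [NormedAddCommGroup H] [InnerProductSpace ℝ H] [CompleteSpace H]
    [MeasurableSpace H] [BorelSpace H]
    (Q : Measure H) [SigmaFinite Q]
    (hQ : ∀ A : AffineSubspace ℝ H, FiniteDimensional ℝ A.direction → Q (A : Set H) = 0)
    (k : ℕ) (hk : 1 ≤ k)
    (A : AffineSubspace ℝ (Fin k → H)) (hA : FiniteDimensional ℝ A.direction) :
    (Measure.pi fun _ : Fin k => Q) (A : Set (Fin k → H)) = 0 :=
  fd_affine_subspace_null_in_power_general Q hQ k hk A hA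
end

section
/- Let H be a real Hilbert space and Q a probability measure on H such that every proper (strict) affine subspace of H is Q-null. Then for every k ≥ 1, every proper affine subspace A of H^k satisfies Q^{⊗k}(A) = 0. -/
/-!
A measure giving no mass to proper affine subspaces forces finite dimension: otherwise the
kernels of countably many coordinate functionals of a Hamel basis would cover the space.
In finite dimension a proper affine subspace `A` of `H^k` is closed, and its direction misses
some coordinate axis `i`. Then every slice of `A` along coordinate `i` is a proper affine
subspace of `H`, hence `Q`-null, and Fubini makes `A` null for the product measure.
-/

open MeasureTheory

section FiniteDimensional

variable {K E : Type*} [DivisionRing K] [AddCommGroup E] [Module K E]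

theorem Module.Basis.exists_coord_eq_zero_of_embedding {ι : Type*} (b : Module.Basis ι K E)
    (f : ℕ ↪ ι) (x : E) : ∃ n, b.coord (f n) x = 0 := by
  obtain ⟨n, hn⟩ :=
    Infinite.exists_notMem_finset ((b.repr x).support.preimage f f.injective.injOn)
  exact ⟨n, by simpa using hn⟩

theorem Module.Basis.ker_coord_toAffineSubspace_ne_top {ι : Type*} (b : Module.Basis ι K E)
    (i : ι) : (LinearMap.ker (b.coord i)).toAffineSubspace ≠ ⊤ := by
  intro h
  have := congrArg AffineSubspace.direction h
  rw [Submodule.toAffineSubspace_direction, AffineSubspace.direction_top,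
    LinearMap.ker_eq_top] at this
  simpa using LinearMap.congr_fun this (b i)

theorem finiteDimensional_of_forall_affineSubspace_null {_ : MeasurableSpace E}
    (μ : Measure E) [NeZero μ] (hμ : ∀ A : AffineSubspace K E, A ≠ ⊤ → μ A = 0) :
    FiniteDimensional K E := by
  by_contra hinf
  let b := Module.Free.chooseBasis K E
  have : Infinite (Module.Free.ChooseBasisIndex K E) := by
    rw [← not_finite_iff_infinite]
    exact fun _ => hinf (Module.Finite.of_basis b)
  let f := Infinite.natEmbedding (Module.Free.ChooseBasisIndex K E)
  have hker : ∀ n, μ (LinearMap.ker (b.coord (f n))) = 0 := fun n =>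
    hμ _ (b.ker_coord_toAffineSubspace_ne_top (f n))
  have hcover : Set.univ ⊆ ⋃ n, (LinearMap.ker (b.coord (f n)) : Set E) := fun x _ =>
    Set.mem_iUnion.mpr (b.exists_coord_eq_zero_of_embedding f x)
  exact NeZero.ne μ
    (Measure.measure_univ_eq_zero.mp (measure_mono_null hcover (measure_iUnion_null hker)))

end FiniteDimensional

section Slices

variable {k ι : Type*} [Ring k] [DecidableEq ι] {V : ι → Type*} [∀ i, AddCommGroup (V i)]
  [∀ i, Module k (V i)]

def AffineMap.update (x : ∀ i, V i) (i : ι) : V i →ᵃ[k] ∀ i, V i where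
  toFun := Function.update x i
  linear := LinearMap.single k V i
  map_vadd' t v := by
    ext j
    rcases eq_or_ne j i with rfl | h <;> simp [*]

theorem Submodule.exists_range_single_not_le [Finite ι] {p : Submodule k (∀ i, V i)}
    (hp : p ≠ ⊤) : ∃ i, ¬ LinearMap.range (LinearMap.single k V i) ≤ p := by
  by_contra! h
  exact hp (eq_top_iff.mpr ((LinearMap.iSup_range_single k V).ge.trans (iSup_le h)))

theorem AffineSubspace.comap_update_ne_top {A : AffineSubspace k (∀ i, V i)} {i : ι}
    (hi : ¬ LinearMap.range (LinearMap.single k V i) ≤ A.direction) (x : ∀ i, V i) :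
    A.comap (AffineMap.update x i) ≠ ⊤ := by
  intro h
  refine hi (LinearMap.range_le_iff_comap.mpr (eq_top_iff.mpr fun v _ => ?_))
  have hmem : ∀ t, AffineMap.update x i t ∈ A := fun t => by
    rw [← AffineSubspace.mem_comap, h]
    exact AffineSubspace.mem_top _ _ _
  have := A.vsub_mem_direction (hmem v) (hmem 0)
  rwa [← AffineMap.linearMap_vsub, vsub_eq_sub, sub_zero] at this

end Slices

theorem MeasureTheory.Measure.pi_eq_zero_of_forall_update_null {ι : Type*} [Fintype ι]
    [DecidableEq ι] {X : ι → Type*} [∀ i, MeasurableSpace (X i)] (μ : ∀ i, Measure (X i))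
    [∀ i, SigmaFinite (μ i)] {s : Set (∀ i, X i)} (hs : MeasurableSet s) (i : ι)
    (h : ∀ x, μ i (Function.update x i ⁻¹' s) = 0) : Measure.pi μ s = 0 := by
  rcases s.eq_empty_or_nonempty with rfl | ⟨x, -⟩
  · exact measure_empty
  have hslice : (fun y => ∫⁻ t, s.indicator 1 (Function.update y i t) ∂μ i) = 0 := by
    ext y
    rw [Pi.zero_apply, ← h y, ← lintegral_indicator_one (measurable_update y hs)]
    rfl
  rw [← lintegral_indicator_one hs, lintegral_eq_lmarginal_univ x,
    lmarginal_erase' _ (measurable_one.indicator hs) (Finset.mem_univ i), hslice]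
  simp [lmarginal]

theorem proper_affine_subspace_null_in_power_general
    {H : Type*} [NormedAddCommGroup H] [InnerProductSpace ℝ H]
    [MeasurableSpace H] [BorelSpace H]
    (Q : Measure H) [IsProbabilityMeasure Q]
    (hQ : ∀ A : AffineSubspace ℝ H, A ≠ ⊤ → Q (A : Set H) = 0)
    (k : ℕ)
    (A : AffineSubspace ℝ (Fin k → H)) (hA : A ≠ ⊤) :
    (Measure.pi fun _ : Fin k => Q) (A : Set (Fin k → H)) = 0 := by
  have : FiniteDimensional ℝ H := finiteDimensional_of_forall_affineSubspace_null Q hQ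
  rcases A.eq_bot_or_nonempty with rfl | hne
  · exact measure_empty
  have hdir : A.direction ≠ ⊤ := (A.direction_eq_top_iff_of_nonempty hne).not.mpr hA
  obtain ⟨i, hi⟩ := Submodule.exists_range_single_not_le hdir
  exact Measure.pi_eq_zero_of_forall_update_null _
    A.closed_of_finiteDimensional.measurableSet i fun x => hQ _ (A.comap_update_ne_top hi x)

theorem proper_affine_subspace_null_in_power
    {H : Type*} [NormedAddCommGroup H] [InnerProductSpace ℝ H] [CompleteSpace H]
    [MeasurableSpace H] [BorelSpace H]
    (Q : Measure H) [IsProbabilityMeasure Q]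
    (hQ : ∀ A : AffineSubspace ℝ H, A ≠ ⊤ → Q (A : Set H) = 0)
    (k : ℕ) (hk : 1 ≤ k)
    (A : AffineSubspace ℝ (Fin k → H)) (hA : A ≠ ⊤) :
    (Measure.pi fun _ : Fin k => Q) (A : Set (Fin k → H)) = 0 :=
  proper_affine_subspace_null_in_power_general Q hQ k A hA
end
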